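/- arXiv:quant-ph/0410213 — 6 statements merged into one kernel-verified Lean document; each statement's English description precedes it below -/
import Mathlib

section
/- Let V₀ and C be 2×2 real symmetric matrices and let M̃ be the 4×4 complex block matrix M̃ = [[C + V₀, C − (i/2)Ω],[C + (i/2)Ω, C + V₀]]. Then det M̃ = 4·(det V₀)·(det C) + 2·(det V₀ + 1/4)·Tr(V₀ Ω C Ωᵀ) + (det V₀ + 1/4)², i.e. the determinant of M̃ equals the quantity g of Eq. (6) of the paper. -/
open Matrix

set_option maxHeartbeats 2000000

/-- The 2×2 real matrix `Ω = [[0,-1],[1,0]]`. -/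
def Om : Matrix (Fin 2) (Fin 2) ℝ := !![0, -1; 1, 0]

/-- The determinant of the 4×4 complex block matrix
`M̃ = [[C + V₀, C - (i/2)Ω],[C + (i/2)Ω, C + V₀]]` equals the quantity `g` of Eq. (6):
`g = 4 (det V₀)(det C) + 2(det V₀ + 1/4) Tr(V₀ Ω C Ωᵀ) + (det V₀ + 1/4)²`. -/
theorem det_Mtilde_eq_g (V₀ C : Matrix (Fin 2) (Fin 2) ℝ)
    (hV₀ : V₀ᵀ = V₀) (hC : Cᵀ = C) :
    (Matrix.fromBlocks
        ((C + V₀).map (Complex.ofReal))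
        (C.map (Complex.ofReal) - (Complex.I / 2) • Om.map (Complex.ofReal))
        (C.map (Complex.ofReal) + (Complex.I / 2) • Om.map (Complex.ofReal))
        ((C + V₀).map (Complex.ofReal))).det
      = ((4 * V₀.det * C.det + 2 * (V₀.det + 1/4) * (V₀ * Om * C * Omᵀ).trace
          + (V₀.det + 1/4) ^ 2 : ℝ) : ℂ) := by
  have hv : V₀ 0 1 = V₀ 1 0 := by simpa using congrFun (congrFun hV₀ 1) 0
  have hc : C 0 1 = C 1 0 := by simpa using congrFun (congrFun hC 1) 0
  have e0 : (finSumFinEquiv.symm (0:Fin 4) : Fin 2 ⊕ Fin 2) = Sum.inl 0 := by decide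
  have e1 : (finSumFinEquiv.symm (1:Fin 4) : Fin 2 ⊕ Fin 2) = Sum.inl 1 := by decide
  have e2 : (finSumFinEquiv.symm (2:Fin 4) : Fin 2 ⊕ Fin 2) = Sum.inr 0 := by decide
  have e3 : (finSumFinEquiv.symm (3:Fin 4) : Fin 2 ⊕ Fin 2) = Sum.inr 1 := by decide
  rw [← Matrix.det_reindex_self finSumFinEquiv]
  have hN : Matrix.reindex finSumFinEquiv finSumFinEquiv (Matrix.fromBlocks
        ((C + V₀).map (Complex.ofReal))
        (C.map (Complex.ofReal) - (Complex.I / 2) • Om.map (Complex.ofReal))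
        (C.map (Complex.ofReal) + (Complex.I / 2) • Om.map (Complex.ofReal))
        ((C + V₀).map (Complex.ofReal))) =
      !![(C 0 0 + V₀ 0 0 : ℂ), (C 0 1 + V₀ 0 1 : ℂ), (C 0 0 : ℂ), (C 0 1 : ℂ) + Complex.I/2;
         (C 1 0 + V₀ 1 0 : ℂ), (C 1 1 + V₀ 1 1 : ℂ), (C 1 0 : ℂ) - Complex.I/2, (C 1 1 : ℂ);
         (C 0 0 : ℂ), (C 0 1 : ℂ) - Complex.I/2, (C 0 0 + V₀ 0 0 : ℂ), (C 0 1 + V₀ 0 1 : ℂ);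
         (C 1 0 : ℂ) + Complex.I/2, (C 1 1 : ℂ), (C 1 0 + V₀ 1 0 : ℂ), (C 1 1 + V₀ 1 1 : ℂ)] := by
    ext i j
    fin_cases i <;> fin_cases j <;>
      simp [Om, Matrix.fromBlocks, Matrix.map_apply, e0, e1, e2, e3] <;> ring
  rw [hN]
  have hI : Complex.I^2 = -1 := Complex.I_sq
  have hOm : Omᵀ = !![0,1;-1,0] := by
    ext i j; fin_cases i <;> fin_cases j <;> simp [Om]
  rw [hOm]
  simp [Matrix.det_succ_row_zero, Fin.sum_univ_succ, Matrix.det_fin_two,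
    Matrix.trace_fin_two, Matrix.mul_apply, Fin.sum_univ_two, Om, hv, hc]
  simp only [show (Fin.castSucc 2 : Fin 4) = 2 from rfl, show (Fin.succ 2 : Fin 4) = 3 from rfl,
    show ((2:Fin 4).succAbove 2 : Fin 4) = 3 from rfl, show ((1:Fin 4).succAbove 2 : Fin 4) = 3 from rfl,
    show ((3:Fin 4).succAbove (2:Fin 3) : Fin 4) = 2 from rfl, show ((3:Fin 4).succAbove (1:Fin 3) : Fin 4) = 1 from rfl,
    show ((3:Fin 4).succAbove (0:Fin 3) : Fin 4) = 0 from rfl,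
    Matrix.cons_val_two, Matrix.cons_val_three, Matrix.vecHead, Matrix.vecTail,
    Matrix.cons_val_succ, Matrix.cons_val_zero, Matrix.cons_val_one, Matrix.head_cons, Function.comp]
  ring_nf
  have hI4 : Complex.I ^ 4 = 1 := by
    rw [show (4:ℕ) = 2*2 from rfl, pow_mul, hI]; norm_num
  simp only [hI4, hI]
  ring
end

section
/- Let C be a 2×2 real symmetric positive definite matrix. For ν ≥ 1/2 define g(ν) := 4ν²·det C + 2ν(ν² + 1/4)·Tr C + (ν² + 1/4)² and M(ν) := (1/g(ν))·Ω·[2ν(ν² + 1/4)·I + 4ν²·C]·Ωᵀ, where I is the 2×2 identity. Then for every ν ≥ 1/2 the matrix M(1/2) − M(ν) is positive semidefinite. -/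
open Matrix

/-- `g(ν) = 4ν² det C + 2ν(ν² + 1/4) Tr C + (ν² + 1/4)²`. -/
noncomputable def gth (C : Matrix (Fin 2) (Fin 2) ℝ) (ν : ℝ) : ℝ :=
  4 * ν ^ 2 * C.det + 2 * ν * (ν ^ 2 + 1/4) * C.trace + (ν ^ 2 + 1/4) ^ 2

/-- The measurement matrix `M(ν) = (1/g(ν)) Ω [2ν(ν² + 1/4) I + 4ν² C] Ωᵀ` evaluated for a
thermal measurement operator with correlation matrix `V₀ = ν I`. -/
noncomputable def Mth (C : Matrix (Fin 2) (Fin 2) ℝ) (ν : ℝ) : Matrix (Fin 2) (Fin 2) ℝ :=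
  (1 / gth C ν) •
    (Om * ((2 * ν * (ν ^ 2 + 1/4)) • (1 : Matrix (Fin 2) (Fin 2) ℝ) + (4 * ν ^ 2) • C) * Omᵀ)

/-- A real symmetric 2×2 matrix with nonnegative diagonal and nonnegative determinant
is positive semidefinite. -/
lemma posSemidef_fin_two {a b c : ℝ} (ha : 0 ≤ a) (hc : 0 ≤ c) (h : b ^ 2 ≤ a * c) :
    (!![a, b; b, c] : Matrix (Fin 2) (Fin 2) ℝ).PosSemidef := by
  rw [Matrix.posSemidef_iff_dotProduct_mulVec]
  constructor
  · ext i j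
    fin_cases i <;> fin_cases j <;> simp [Matrix.conjTranspose_apply]
  · intro x
    simp only [dotProduct, mulVec, Fin.sum_univ_two, star_trivial]
    simp [Matrix.cons_val_zero, Matrix.cons_val_one]
    rcases eq_or_lt_of_le ha with h0 | hpos
    · have hb : b = 0 := by nlinarith [sq_nonneg b]
      rw [← h0, hb]
      nlinarith [mul_nonneg hc (sq_nonneg (x 1))]
    · nlinarith [sq_nonneg (a * x 0 + b * x 1),
        mul_nonneg (sub_nonneg.2 h) (sq_nonneg (x 1)), mul_pos hpos hpos, hpos.le]

/-- `gth` of an explicit symmetric 2×2 matrix. -/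
lemma gth_lit (p q r μ : ℝ) :
    gth !![p, r; r, q] μ =
      4 * μ ^ 2 * (p * q - r ^ 2) + 2 * μ * (μ ^ 2 + 1/4) * (p + q) + (μ ^ 2 + 1/4) ^ 2 := by
  rw [gth, Matrix.det_fin_two_of, Matrix.trace_fin_two_of]
  ring

/-- `Mth` of an explicit symmetric 2×2 matrix. -/
lemma Mth_lit (p q r μ : ℝ) :
    Mth !![p, r; r, q] μ =
      (1 / gth !![p, r; r, q] μ) •
        !![2 * μ * (μ ^ 2 + 1/4) + 4 * μ ^ 2 * q, -(4 * μ ^ 2 * r);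
           -(4 * μ ^ 2 * r), 2 * μ * (μ ^ 2 + 1/4) + 4 * μ ^ 2 * p] := by
  have h1 : (2 * μ * (μ ^ 2 + 1/4)) • (1 : Matrix (Fin 2) (Fin 2) ℝ)
      + (4 * μ ^ 2) • !![p, r; r, q] =
      !![2 * μ * (μ ^ 2 + 1/4) + 4 * μ ^ 2 * p, 4 * μ ^ 2 * r;
         4 * μ ^ 2 * r, 2 * μ * (μ ^ 2 + 1/4) + 4 * μ ^ 2 * q] := by
    ext i j
    fin_cases i <;> fin_cases j <;> simp [Matrix.one_apply]
  have hOmT : Omᵀ = !![0, 1; -1, 0] := by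
    ext i j
    fin_cases i <;> fin_cases j <;> simp [Om]
  rw [Mth, h1, hOmT, Om, Matrix.mul_fin_two, Matrix.mul_fin_two]
  congr 1
  ext i j
  fin_cases i <;> fin_cases j <;> simp <;> ring

lemma smul_sub_smul_lit (a b x y z u v w : ℝ) :
    a • (!![x, y; y, z] : Matrix (Fin 2) (Fin 2) ℝ) - b • !![u, v; v, w] =
      !![a * x - b * u, a * y - b * v; a * y - b * v, a * z - b * w] := by
  ext i j
  fin_cases i <;> fin_cases j <;> simp

set_option maxHeartbeats 1000000 in
/-- Key step of Proposition 2: for every `ν ≥ 1/2`, `M(1/2) - M(ν)` is positive semidefinite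
(the vacuum dominates every thermal measurement). -/
theorem Mth_half_sub_Mth_posSemidef (C : Matrix (Fin 2) (Fin 2) ℝ)
    (hC : C.PosDef) (ν : ℝ) (hν : 1/2 ≤ ν) :
    (Mth C (1/2) - Mth C ν).PosSemidef := by
  have hr : C 1 0 = C 0 1 := by
    have := congrFun (congrFun hC.1 0) 1
    simpa [conjTranspose] using this
  have hnu : (0:ℝ) < ν := lt_of_lt_of_le (by norm_num) hν
  have hp : 0 < C 0 0 := by
    have := hC.dotProduct_mulVec_pos (x := ![1, 0]) (by intro h; simpa using congrFun h 0)
    simpa [dotProduct, mulVec, Fin.sum_univ_two] using this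
  have hq : 0 < C 1 1 := by
    have := hC.dotProduct_mulVec_pos (x := ![0, 1]) (by intro h; simpa using congrFun h 1)
    simpa [dotProduct, mulVec, Fin.sum_univ_two] using this
  have hd : 0 < C 0 0 * C 1 1 - C 0 1 ^ 2 := by
    have h := hC.det_pos
    rw [Matrix.det_fin_two, hr] at h
    nlinarith [h]
  have hCm : C = !![C 0 0, C 0 1; C 0 1, C 1 1] := by
    ext i j
    fin_cases i <;> fin_cases j <;> simp [hr]
  rw [hCm]
  set p := C 0 0
  set q := C 1 1
  set r := C 0 1
  clear_value p q r
  clear hCm hr hC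
  set t : ℝ := ν ^ 2 + 1/4 with ht
  have ht2 : (0:ℝ) < t := by rw [ht]; positivity
  -- the two denominators are positive
  have hgA : 0 < gth !![p, r; r, q] (1/2) := by
    rw [gth_lit]; nlinarith
  have hg : 0 < gth !![p, r; r, q] ν := by
    rw [gth_lit, ← ht]
    nlinarith [mul_pos (mul_pos hnu hnu) hd, mul_pos (mul_pos hnu ht2) (add_pos hp hq),
      mul_pos ht2 ht2]
  set gA := gth !![p, r; r, q] (1/2) with hgA0
  set g := gth !![p, r; r, q] ν with hg0
  have hgA' : gA = (p * q - r ^ 2) + (p + q) / 2 + 1/4 := by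
    rw [hgA0, gth_lit]; ring
  have hg' : g = 4 * ν ^ 2 * (p * q - r ^ 2) + 2 * ν * t * (p + q) + t ^ 2 := by
    rw [hg0, gth_lit, ht]
  clear_value gA g
  rw [Mth_lit, Mth_lit, ← hgA0, ← hg0, smul_sub_smul_lit]
  -- closed forms for the three entries of the difference
  have e00 : 1 / gA * (2 * (1/2) * ((1/2) ^ 2 + 1/4) + 4 * (1/2) ^ 2 * q)
      - 1 / g * (2 * ν * (ν ^ 2 + 1/4) + 4 * ν ^ 2 * q)
      = (ν - 1/2) ^ 2 * ((q + 1/2) * (2 * ν * q + t) + 2 * ν * r ^ 2) / (gA * g) := by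
    rw [hgA', hg', ht]; field_simp; ring
  have e01 : 1 / gA * (-(4 * (1/2) ^ 2 * r)) - 1 / g * (-(4 * ν ^ 2 * r))
      = (ν - 1/2) ^ 2 * (-((q + 1/2) * (2 * ν * r)) - r * (2 * ν * p + t)) / (gA * g) := by
    rw [hgA', hg', ht]; field_simp; ring
  have e11 : 1 / gA * (2 * (1/2) * ((1/2) ^ 2 + 1/4) + 4 * (1/2) ^ 2 * p)
      - 1 / g * (2 * ν * (ν ^ 2 + 1/4) + 4 * ν ^ 2 * p)
      = (ν - 1/2) ^ 2 * (2 * ν * r ^ 2 + (p + 1/2) * (2 * ν * p + t)) / (gA * g) := by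
    rw [hgA', hg', ht]; field_simp; ring
  rw [e00, e01, e11]
  have hgag : (0:ℝ) < gA * g := mul_pos hgA hg
  apply posSemidef_fin_two
  · apply div_nonneg _ hgag.le
    have h1 : 0 ≤ (q + 1/2) * (2 * ν * q + t) + 2 * ν * r ^ 2 := by
      nlinarith [sq_nonneg r, mul_pos hnu hq, ht2]
    positivity
  · apply div_nonneg _ hgag.le
    have h1 : 0 ≤ 2 * ν * r ^ 2 + (p + 1/2) * (2 * ν * p + t) := by
      nlinarith [sq_nonneg r, mul_pos hnu hp, ht2]
    positivity
  · have hm : (-((q + 1/2) * (2 * ν * r)) - r * (2 * ν * p + t)) ^ 2 ≤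
        ((q + 1/2) * (2 * ν * q + t) + 2 * ν * r ^ 2) *
        (2 * ν * r ^ 2 + (p + 1/2) * (2 * ν * p + t)) := by
      have hid : ((q + 1/2) * (2 * ν * q + t) + 2 * ν * r ^ 2) *
          (2 * ν * r ^ 2 + (p + 1/2) * (2 * ν * p + t)) -
          (-((q + 1/2) * (2 * ν * r)) - r * (2 * ν * p + t)) ^ 2
          = gA * g := by
        rw [hgA', hg', ht]; ring
      nlinarith [hid, hgag]
    have hk : (0:ℝ) ≤ ((ν - 1/2) ^ 2 / (gA * g)) ^ 2 := by positivity
    have hmul := mul_le_mul_of_nonneg_left hm hk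
    have lhs_eq : ((ν - 1/2) ^ 2 * (-((q + 1/2) * (2 * ν * r)) - r * (2 * ν * p + t)) / (gA * g)) ^ 2
        = ((ν - 1/2) ^ 2 / (gA * g)) ^ 2 * (-((q + 1/2) * (2 * ν * r)) - r * (2 * ν * p + t)) ^ 2 := by
      ring
    have rhs_eq : (ν - 1/2) ^ 2 * ((q + 1/2) * (2 * ν * q + t) + 2 * ν * r ^ 2) / (gA * g) *
        ((ν - 1/2) ^ 2 * (2 * ν * r ^ 2 + (p + 1/2) * (2 * ν * p + t)) / (gA * g))
        = ((ν - 1/2) ^ 2 / (gA * g)) ^ 2 * (((q + 1/2) * (2 * ν * q + t) + 2 * ν * r ^ 2) *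
          (2 * ν * r ^ 2 + (p + 1/2) * (2 * ν * p + t))) := by
      ring
    rw [lhs_eq, rhs_eq]
    exact hmul
end

section
/- For every real q ≥ 1/2, with s = (q+1)/2, t = q/2, w = √((2q−1)(q+1))/2 and h = 1 + q + s − 2w, one has h > 0 and s·(w − t)² − s²·h + h/4 < 0; consequently γ := (w − t)²·[s·(w − t)² − s²·h + h/4] ≤ 0, with γ < 0 whenever w ≠ t. -/
/-! With `u = √((2q−1)(q+1))`, so that `w = u/2` and `h = 3(q+1)/2 − u`, the relation
`u² = (2q−1)(q+1)` collapses the bracket `s(w−t)² − s²h + h/4` to `(2qu − (q+1)(5q+1))/8`.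
Both `h > 0` and the negativity of the bracket then follow by comparing squares of
nonnegative quantities. -/

section

variable {q u : ℝ}

lemma lt_three_mul_add_one_div_two_of_sq_eq (hq : -1 < q)
    (hu : u ^ 2 = (2 * q - 1) * (q + 1)) : u < 3 * (q + 1) / 2 := by
  have hlt : u ^ 2 < (3 * (q + 1) / 2) ^ 2 := by nlinarith
  exact (abs_lt_of_sq_lt_sq' hlt (by linarith)).2

lemma channel_bracket_eq (hu : u ^ 2 = (2 * q - 1) * (q + 1)) :
    (q + 1) / 2 * (u / 2 - q / 2) ^ 2 - ((q + 1) / 2) ^ 2 * (3 * (q + 1) / 2 - u)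
      + (3 * (q + 1) / 2 - u) / 4 = (2 * q * u - (q + 1) * (5 * q + 1)) / 8 := by
  linear_combination (q + 1) / 8 * hu

lemma two_mul_mul_lt_of_sq_eq (hq : 0 ≤ q) (hu : u ^ 2 = (2 * q - 1) * (q + 1)) :
    2 * q * u < (q + 1) * (5 * q + 1) := by
  have hlt : (2 * q * u) ^ 2 < ((q + 1) * (5 * q + 1)) ^ 2 := by
    rw [mul_pow, hu]
    nlinarith [pow_nonneg hq 3, pow_nonneg hq 4]
  exact (abs_lt_of_sq_lt_sq' hlt (by positivity)).2

end

/-- Section V.A: for every `q ≥ 1/2`, with `s = (q+1)/2`, `t = q/2`,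
`w = √((2q−1)(q+1))/2` and `h = 1 + q + s − 2w`, one has `h > 0` and
`s(w−t)² − s²h + h/4 < 0`; hence `γ = (w−t)²[s(w−t)² − s²h + h/4] ≤ 0`, with `γ < 0`
whenever `w ≠ t` (heterodyne detection is Charlie's optimal measurement). -/
theorem gamma_nonpos_of_channel (q : ℝ) (hq : 1/2 ≤ q) :
    let s := (q + 1) / 2
    let t := q / 2
    let w := Real.sqrt ((2*q - 1) * (q + 1)) / 2
    let h := 1 + q + s - 2*w
    0 < h ∧ s * (w - t) ^ 2 - s ^ 2 * h + h / 4 < 0 ∧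
      (w - t) ^ 2 * (s * (w - t) ^ 2 - s ^ 2 * h + h / 4) ≤ 0 ∧
      (w ≠ t → (w - t) ^ 2 * (s * (w - t) ^ 2 - s ^ 2 * h + h / 4) < 0) := by
  intro s t w h
  have hu : Real.sqrt ((2*q - 1) * (q + 1)) ^ 2 = (2*q - 1) * (q + 1) :=
    Real.sq_sqrt (by nlinarith)
  have hh_eq : h = 3 * (q + 1) / 2 - Real.sqrt ((2*q - 1) * (q + 1)) := by ring
  have hh : 0 < h := by
    linarith [lt_three_mul_add_one_div_two_of_sq_eq (by linarith) hu]
  have hbracket : s * (w - t) ^ 2 - s ^ 2 * h + h / 4 < 0 := by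
    rw [hh_eq, channel_bracket_eq hu]
    linarith [two_mul_mul_lt_of_sq_eq (by linarith) hu]
  refine ⟨hh, hbracket, mul_nonpos_of_nonneg_of_nonpos (sq_nonneg _) hbracket.le, fun hne => ?_⟩
  exact mul_neg_of_pos_of_neg (sq_pos_of_ne_zero (sub_ne_zero.mpr hne)) hbracket
end

section
/- For every real q ≥ 1/2, with s = (q+1)/2, t = q/2, w = √((2q−1)(q+1))/2 and h = 1 + q + s − 2w, one has h > 0, (2s+1)·h − (w − t)² > 0, h² − (w − t)²·(s + 1/2)⁻²·[(2s+1)·h − (w − t)²] > 0, and the assisted fidelity F(q) := {h² − (w − t)²·(s + 1/2)⁻²·[(2s+1)·h − (w − t)²]}^(−1/2) satisfies F(q) ≥ 1/h = F^tr(q), with strict inequality whenever w ≠ t. -/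
/-!
With `c = s + 1/2` (so that `2s + 1 = 2c`) and `d = (w - t)²`, the quantity `K` is the perfect
square `(h - d/c)²`. Hence `F(q) = 1/(h - d/c)`, which dominates `1/h = F^tr(q)` as soon as
`0 ≤ d < c h`, strictly when `d > 0`. For the channel `V(q)` the gap `c h - d = (8q + 7)/4 - 2w`
is linear in `w`, and it is positive because `w² = (2q - 1)(q + 1)/4 < (q + 7/8)²`.
-/

lemma sq_sub_mul_inv_sq_mul_eq_sq {c : ℝ} (hc : c ≠ 0) (h d : ℝ) :
    h ^ 2 - d * c⁻¹ ^ 2 * (2 * c * h - d) = (h - d / c) ^ 2 := by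
  field_simp
  ring

lemma Real.sq_rpow_neg_half {x : ℝ} (hx : 0 ≤ x) : (x ^ 2) ^ (-(1/2) : ℝ) = x⁻¹ := by
  rw [← Real.rpow_natCast_mul hx]
  norm_num [Real.rpow_neg_one]

lemma one_div_le_completed_square_rpow_neg_half {c d h : ℝ} (hc : 0 < c) (hd : 0 ≤ d)
    (hgap : d < c * h) :
    let K := h ^ 2 - d * c⁻¹ ^ 2 * (2 * c * h - d)
    0 < h ∧ 0 < 2 * c * h - d ∧ 0 < K ∧
      1 / h ≤ K ^ (-(1/2) : ℝ) ∧ (0 < d → 1 / h < K ^ (-(1/2) : ℝ)) := by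
  intro K
  have hh : 0 < h := pos_of_mul_pos_right (hd.trans_lt hgap) hc.le
  have hm : 0 < h - d / c := sub_pos.2 ((div_lt_iff₀' hc).2 hgap)
  have hK : K = (h - d / c) ^ 2 := sq_sub_mul_inv_sq_mul_eq_sq hc.ne' h d
  have hF : K ^ (-(1/2) : ℝ) = (h - d / c)⁻¹ := by rw [hK, Real.sq_rpow_neg_half hm.le]
  refine ⟨hh, by nlinarith, hK ▸ by positivity, ?_, fun hd' => ?_⟩
  · rw [hF, one_div]
    exact inv_anti₀ hm (sub_le_self _ (div_nonneg hd hc.le))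
  · rw [hF, one_div]
    exact inv_strictAnti₀ hm (sub_lt_self _ (div_pos hd' hc))

lemma sqrt_two_mul_sub_one_mul_add_one_div_two_lt {q : ℝ} (hq : 1/2 ≤ q) :
    Real.sqrt ((2*q - 1) * (q + 1)) / 2 < q + 7/8 := by
  rw [div_lt_iff₀ two_pos, Real.sqrt_lt' (by linarith)]
  nlinarith

lemma channel_gap_pos {q : ℝ} (hq : 1/2 ≤ q) :
    let w := Real.sqrt ((2*q - 1) * (q + 1)) / 2
    (w - q / 2) ^ 2 < ((q + 1) / 2 + 1/2) * (1 + q + (q + 1) / 2 - 2*w) := by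
  intro w
  have hw2 : w ^ 2 = (2*q - 1) * (q + 1) / 4 := by
    rw [div_pow, Real.sq_sqrt (by nlinarith)]
    norm_num
  have hw : w < q + 7/8 := sqrt_two_mul_sub_one_mul_add_one_div_two_lt hq
  have hgap : ((q + 1) / 2 + 1/2) * (1 + q + (q + 1) / 2 - 2*w) - (w - q / 2) ^ 2
      = (8*q + 7) / 4 - 2*w := by linear_combination -hw2
  linarith

/-- Section V.A, Eq. (25): for every `q ≥ 1/2`, with `s = (q+1)/2`, `t = q/2`,
`w = √((2q−1)(q+1))/2` and `h = 1 + q + s − 2w`, one has `h > 0`,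
`(2s+1)h − (w−t)² > 0`, `h² − (w−t)²(s+1/2)⁻²[(2s+1)h − (w−t)²] > 0`, and the optimal
assisted fidelity `F(q) = {h² − (w−t)²(s+1/2)⁻²[(2s+1)h − (w−t)²]}^(−1/2)` satisfies
`F(q) ≥ 1/h = F^tr(q)`, strictly whenever `w ≠ t`. -/
theorem assisted_fidelity_ge_nonassisted (q : ℝ) (hq : 1/2 ≤ q) :
    let s := (q + 1) / 2
    let t := q / 2
    let w := Real.sqrt ((2*q - 1) * (q + 1)) / 2
    let h := 1 + q + s - 2*w
    let K := h ^ 2 - (w - t) ^ 2 * (s + 1/2)⁻¹ ^ 2 * ((2*s + 1) * h - (w - t) ^ 2)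
    0 < h ∧ 0 < (2*s + 1) * h - (w - t) ^ 2 ∧ 0 < K ∧
      1 / h ≤ K ^ (-(1/2) : ℝ) ∧ (w ≠ t → 1 / h < K ^ (-(1/2) : ℝ)) := by
  intro s t w h K
  have hs : 2*s + 1 = 2 * (s + 1/2) := by ring
  have hc : 0 < s + 1/2 := by simp only [s]; linarith
  obtain ⟨hh, hA, hK, hle, hlt⟩ :=
    one_div_le_completed_square_rpow_neg_half hc (sq_nonneg (w - t)) (channel_gap_pos hq)
  rw [← hs] at hA hK hle hlt
  exact ⟨hh, hA, hK, hle, fun hwt => hlt (sq_pos_of_ne_zero (sub_ne_zero.2 hwt))⟩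
end

section
/- Let a = 10.15, b = 5.52, c = 15.2, d = 8.87, e = 12.3, f = 6.96, and let V be the 6×6 real matrix with 2×2 blocks V = [[aI, fI, eR],[fI, bI, dR],[eR, dR, cI]], where I is the 2×2 identity and R = diag(1,−1). Then: (i) V − (i/2)·J is positive semidefinite as a 6×6 complex Hermitian matrix, where J = diag(Ω, Ω, Ω) with Ω = [[0,−1],[1,0]] (V is a genuine three-mode correlation matrix); and (ii) the reduced matrix V^tr = [[aI, fI],[fI, bI]] satisfies V^tr − (i/2)·J̃ ≥ 0 as a 4×4 complex Hermitian matrix, where J̃ = diag(Ω, −Ω) (Simon's condition, so the reduced Alice–Bob state is separable). -/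
open Matrix ComplexOrder

/-- `R = diag(1,−1)`. -/
def Rm : Matrix (Fin 2) (Fin 2) ℝ := !![1, 0; 0, -1]

/-- Assemble a 3×3 array of 2×2 blocks into a 6×6 matrix (indexed by `Fin 3 × Fin 2`). -/
def blockMat3 (B : Matrix (Fin 3) (Fin 3) (Matrix (Fin 2) (Fin 2) ℝ)) :
    Matrix (Fin 3 × Fin 2) (Fin 3 × Fin 2) ℝ :=
  Matrix.of fun p r => B p.1 r.1 p.2 r.2

/-- Assemble a 2×2 array of 2×2 blocks into a 4×4 matrix (indexed by `Fin 2 × Fin 2`). -/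
def blockMat2 (B : Matrix (Fin 2) (Fin 2) (Matrix (Fin 2) (Fin 2) ℝ)) :
    Matrix (Fin 2 × Fin 2) (Fin 2 × Fin 2) ℝ :=
  Matrix.of fun p r => B p.1 r.1 p.2 r.2

set_option maxHeartbeats 1000000

/-- A complex matrix of the form `P + iQ` (with `P`, `Q` real) that admits a rational
`L D Lᴴ` factorization with `D` diagonal nonnegative is positive semidefinite. -/
lemma ldl_psd {n : Type*} [Fintype n] [DecidableEq n]
    (Lr Li P Q : Matrix n n ℝ) (d : n → ℝ) (hd : ∀ i, 0 ≤ d i)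
    (h1 : Lr * Matrix.diagonal d * Lrᵀ + Li * Matrix.diagonal d * Liᵀ = P)
    (h2 : Li * Matrix.diagonal d * Lrᵀ - Lr * Matrix.diagonal d * Liᵀ = Q) :
    (P.map Complex.ofReal + Complex.I • Q.map Complex.ofReal).PosSemidef := by
  set L : Matrix n n ℂ := Lr.map Complex.ofReal + Complex.I • Li.map Complex.ofReal with hL
  have hD : (Matrix.diagonal (fun i => (d i : ℂ))).PosSemidef := by
    rw [Matrix.posSemidef_diagonal_iff]
    intro i
    exact_mod_cast Complex.zero_le_real.mpr (hd i)
  have h := hD.conjTranspose_mul_mul_same Lᴴ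
  rw [conjTranspose_conjTranspose] at h
  have key : P.map Complex.ofReal + Complex.I • Q.map Complex.ofReal
      = L * Matrix.diagonal (fun i => (d i : ℂ)) * Lᴴ := by
    subst h1 h2
    ext i j
    simp only [hL, Matrix.add_apply, Matrix.sub_apply, Matrix.map_apply, Matrix.smul_apply,
      Matrix.mul_apply, Matrix.diagonal_apply, Matrix.conjTranspose_apply, Matrix.transpose_apply,
      smul_eq_mul, mul_ite, ite_mul, mul_zero, zero_mul, Finset.sum_ite_eq, Finset.sum_ite_eq',
      Finset.mem_univ, if_true, Complex.star_def, map_add, _root_.map_mul,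
      Complex.conj_ofReal, Complex.conj_I]
    push_cast
    rw [← Finset.sum_sub_distrib, Finset.mul_sum, ← Finset.sum_add_distrib,
      ← Finset.sum_add_distrib]
    refine Finset.sum_congr rfl fun k _ => ?_
    ring_nf
    rw [Complex.I_sq]
    ring
  rw [key]
  exact h

@[simp] lemma vec6_four {α : Type*} (x0 x1 x2 x3 x4 x5 : α) :
    ![x0, x1, x2, x3, x4, x5] 4 = x4 := rfl
@[simp] lemma vec6_five {α : Type*} (x0 x1 x2 x3 x4 x5 : α) :
    ![x0, x1, x2, x3, x4, x5] 5 = x5 := rfl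
@[simp] lemma vec5_four {α : Type*} (x0 x1 x2 x3 x4 : α) :
    ![x0, x1, x2, x3, x4] 4 = x4 := rfl
@[simp] lemma vec4_three {α : Type*} (x0 x1 x2 x3 : α) :
    ![x0, x1, x2, x3] 3 = x3 := rfl

def eqv3 : Fin 3 × Fin 2 ≃ Fin 6 :=
  ⟨fun p => ⟨2 * p.1.val + p.2.val, by omega⟩,
   fun i => (⟨i.val / 2, by omega⟩, ⟨i.val % 2, by omega⟩),
   by decide, by decide⟩

def eqv2 : Fin 2 × Fin 2 ≃ Fin 4 :=
  ⟨fun p => ⟨2 * p.1.val + p.2.val, by omega⟩,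
   fun i => (⟨i.val / 2, by omega⟩, ⟨i.val % 2, by omega⟩),
   by decide, by decide⟩

noncomputable def P6 : Matrix (Fin 6) (Fin 6) ℝ :=
  !![10.15,0,6.96,0,12.3,0; 0,10.15,0,6.96,0,-12.3; 6.96,0,5.52,0,8.87,0;
     0,6.96,0,5.52,0,-8.87; 12.3,0,8.87,0,15.2,0; 0,-12.3,0,-8.87,0,15.2]

noncomputable def Q6 : Matrix (Fin 6) (Fin 6) ℝ :=
  !![0,1/2,0,0,0,0; -1/2,0,0,0,0,0; 0,0,0,1/2,0,0;
     0,0,-1/2,0,0,0; 0,0,0,0,0,1/2; 0,0,0,0,-1/2,0]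

noncomputable def d6 : Fin 6 → ℝ :=
  ![203/20, 41109/4060, 1260366/1712875, 182833/630183000, 32003/1828330, 76143/5120480]

noncomputable def Lr6 : Matrix (Fin 6) (Fin 6) ℝ :=
  !![1,0,0,0,0,0; 0,1,0,0,0,0; 24/35,0,1,0,0,0; 0,47096/68515,0,1,0,0;
     246/203,0,2844725/5041464,0,1,0; 0,-16646/13703,0,764550/182833,0,1]

noncomputable def Li6 : Matrix (Fin 6) (Fin 6) ℝ :=
  !![0,0,0,0,0,0; -10/203,0,0,0,0,0; 0,-464/13703,0,0,0,0;
     0,0,-2520235/2520732,0,0,0; 0,-820/13703,0,1735775/365666,0,0;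
     0,0,118900/210061,0,49655/128012,0]

noncomputable def P4 : Matrix (Fin 4) (Fin 4) ℝ :=
  !![10.15,0,6.96,0; 0,10.15,0,6.96; 6.96,0,5.52,0; 0,6.96,0,5.52]

noncomputable def Q4 : Matrix (Fin 4) (Fin 4) ℝ :=
  !![0,1/2,0,0; -1/2,0,0,0; 0,0,0,-1/2; 0,0,1/2,0]

noncomputable def d4 : Fin 4 → ℝ :=
  ![203/20, 41109/4060, 1260366/1712875, 403862833/630183000]

noncomputable def Lr4 : Matrix (Fin 4) (Fin 4) ℝ :=
  !![1,0,0,0; 0,1,0,0; 24/35,0,1,0; 0,47096/68515,0,1]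

noncomputable def Li4 : Matrix (Fin 4) (Fin 4) ℝ :=
  !![0,0,0,0; -10/203,0,0,0; 0,-464/13703,0,0; 0,0,905515/2520732,0]

lemma psd6 : (P6.map Complex.ofReal + Complex.I • Q6.map Complex.ofReal).PosSemidef := by
  refine ldl_psd Lr6 Li6 P6 Q6 d6 ?_ ?_ ?_
  · intro i; fin_cases i <;> norm_num [d6]
  · ext i j
    fin_cases i <;> fin_cases j <;>
      norm_num [Lr6, Li6, P6, d6, Matrix.mul_apply, Matrix.diagonal_apply,
        Fin.sum_univ_succ, Fin.sum_univ_zero, -Matrix.cons_mul, Matrix.vecHead, Matrix.vecTail,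
        Matrix.transpose_apply]
  · ext i j
    fin_cases i <;> fin_cases j <;>
      norm_num [Lr6, Li6, Q6, d6, Matrix.mul_apply, Matrix.diagonal_apply,
        Fin.sum_univ_succ, Fin.sum_univ_zero, -Matrix.cons_mul, Matrix.vecHead, Matrix.vecTail,
        Matrix.transpose_apply]

lemma psd4 : (P4.map Complex.ofReal + Complex.I • Q4.map Complex.ofReal).PosSemidef := by
  refine ldl_psd Lr4 Li4 P4 Q4 d4 ?_ ?_ ?_
  · intro i; fin_cases i <;> norm_num [d4]
  · ext i j
    fin_cases i <;> fin_cases j <;>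
      norm_num [Lr4, Li4, P4, d4, Matrix.mul_apply, Matrix.diagonal_apply,
        Fin.sum_univ_succ, Fin.sum_univ_zero, -Matrix.cons_mul, Matrix.vecHead, Matrix.vecTail,
        Matrix.transpose_apply]
  · ext i j
    fin_cases i <;> fin_cases j <;>
      norm_num [Lr4, Li4, Q4, d4, Matrix.mul_apply, Matrix.diagonal_apply,
        Fin.sum_univ_succ, Fin.sum_univ_zero, -Matrix.cons_mul, Matrix.vecHead, Matrix.vecTail,
        Matrix.transpose_apply]

/-- Section V.B with parameters (33): the matrix
`V = [[aI, fI, eR],[fI, bI, dR],[eR, dR, cI]]` with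
`a = 10.15`, `b = 5.52`, `c = 15.2`, `d = 8.87`, `e = 12.3`, `f = 6.96` is a genuine
three-mode correlation matrix (`V − (i/2)J ≥ 0`, `J = diag(Ω,Ω,Ω)`), and the reduced
matrix `V^tr = [[aI, fI],[fI, bI]]` satisfies Simon's separability condition
`V^tr − (i/2)J̃ ≥ 0` with `J̃ = diag(Ω,−Ω)`. -/
theorem channel_genuine_and_reduced_separable :
    let a : ℝ := 10.15
    let b : ℝ := 5.52
    let c : ℝ := 15.2
    let d : ℝ := 8.87
    let e : ℝ := 12.3
    let f : ℝ := 6.96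
    let V := blockMat3
      !![a • (1 : Matrix (Fin 2) (Fin 2) ℝ), f • 1, e • Rm;
         f • 1, b • 1, d • Rm;
         e • Rm, d • Rm, c • 1]
    let J := blockMat3 !![Om, 0, 0; 0, Om, 0; 0, 0, Om]
    let Vtr := blockMat2 !![a • (1 : Matrix (Fin 2) (Fin 2) ℝ), f • 1; f • 1, b • 1]
    let Jtilde := blockMat2 !![Om, 0; 0, -Om]
    (V.map (Complex.ofReal) - (Complex.I / 2) • J.map (Complex.ofReal)).PosSemidef ∧
      (Vtr.map (Complex.ofReal) - (Complex.I / 2) • Jtilde.map (Complex.ofReal)).PosSemidef := by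
  intro a b c d e f V J Vtr Jtilde
  constructor
  · have h : V.map (Complex.ofReal) - (Complex.I / 2) • J.map (Complex.ofReal)
        = (P6.map Complex.ofReal + Complex.I • Q6.map Complex.ofReal).submatrix eqv3 eqv3 := by
      ext ⟨i, j⟩ ⟨k, l⟩
      fin_cases i <;> fin_cases j <;> fin_cases k <;> fin_cases l <;>
        norm_num [V, J, a, b, c, d, e, f, blockMat3, Om, Rm, eqv3, P6, Q6, Matrix.one_apply,
          Complex.ext_iff]
    rw [h, Matrix.posSemidef_submatrix_equiv]
    exact psd6
  · have h : Vtr.map (Complex.ofReal) - (Complex.I / 2) • Jtilde.map (Complex.ofReal)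
        = (P4.map Complex.ofReal + Complex.I • Q4.map Complex.ofReal).submatrix eqv2 eqv2 := by
      ext ⟨i, j⟩ ⟨k, l⟩
      fin_cases i <;> fin_cases j <;> fin_cases k <;> fin_cases l <;>
        norm_num [Vtr, Jtilde, a, b, f, blockMat2, Om, eqv2, P4, Q4, Matrix.one_apply,
          Complex.ext_iff]
    rw [h, Matrix.posSemidef_submatrix_equiv]
    exact psd4
end

section
/- Let a = 10.15, b = 5.52, c = 15.2, d = 8.87, e = 12.3, f = 6.96, and set Γ^tr := (1 + a + b)·I − 2f·R (with I the 2×2 identity, R = diag(1,−1)), C := cI, Σ := eI − dR, U := ΣΩΓ^trΩᵀΣᵀ, uₓ := det C + 1/4, u_y := (det Σ)² − Tr(ΩCΩᵀU), kₓ(ψ) := (sin ψ, cos ψ)·U·(sin ψ, cos ψ)ᵀ, k_y(ψ) := (sin ψ, cos ψ)·C·(sin ψ, cos ψ)ᵀ, and F(ξ, φ) := {det Γ^tr − [−u_y + (ξ/2)·kₓ(φ − π/2) + (1/(2ξ))·kₓ(φ)] / [uₓ + (ξ/2)·k_y(φ − π/2) + (1/(2ξ))·k_y(φ)]}^(−1/2)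 for ξ > 0. Then det Γ^tr > 4, so the non-assisted fidelity F^tr = (det Γ^tr)^(−1/2) < 1/2, while there exist ξ > 0 and φ ∈ ℝ such that 0 < det Γ^tr − [−u_y + (ξ/2)·kₓ(φ − π/2) + (1/(2ξ))·kₓ(φ)] / [uₓ + (ξ/2)·k_y(φ − π/2) + (1/(2ξ))·k_y(φ)] < 4, i.e. the assisted fidelity satisfies F(ξ, φ) > 1/2. -/
open Matrix Real

/-- The vector `(sin ψ, cos ψ)`. -/
noncomputable def vphi (ψ : ℝ) : Fin 2 → ℝ := ![Real.sin ψ, Real.cos ψ]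

/-- Section V.B, conditional generation of entanglement: for the numerical parameters (33),
`det Γ^tr > 4` (so the non-assisted fidelity `F^tr = (det Γ^tr)^(−1/2) < 1/2`: the reduced
Alice–Bob state is separable), yet there exist `ξ > 0` and `φ` with
`0 < det Γ^tr − G(ξ,φ) < 4`, i.e. the assisted fidelity
`F(ξ,φ) = [det Γ^tr − G(ξ,φ)]^(−1/2) > 1/2`. -/
theorem conditional_entanglement_generation :
    let a : ℝ := 10.15
    let b : ℝ := 5.52
    let c : ℝ := 15.2
    let d : ℝ := 8.87
    let e : ℝ := 12.3
    let f : ℝ := 6.96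
    let Γtr := (1 + a + b) • (1 : Matrix (Fin 2) (Fin 2) ℝ) - (2 * f) • Rm
    let C := c • (1 : Matrix (Fin 2) (Fin 2) ℝ)
    let S := e • (1 : Matrix (Fin 2) (Fin 2) ℝ) - d • Rm
    let U := S * Om * Γtr * Omᵀ * Sᵀ
    let ux := C.det + 1/4
    let uy := S.det ^ 2 - (Om * C * Omᵀ * U).trace
    let kx : ℝ → ℝ := fun ψ => vphi ψ ⬝ᵥ (U *ᵥ vphi ψ)
    let ky : ℝ → ℝ := fun ψ => vphi ψ ⬝ᵥ (C *ᵥ vphi ψ)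
    let G : ℝ → ℝ → ℝ := fun ξ φ =>
      (-uy + (ξ/2) * kx (φ - π/2) + (1/(2*ξ)) * kx φ) /
        (ux + (ξ/2) * ky (φ - π/2) + (1/(2*ξ)) * ky φ)
    4 < Γtr.det ∧ (Γtr.det) ^ (-(1/2) : ℝ) < 1/2 ∧
      ∃ ξ > (0 : ℝ), ∃ φ : ℝ,
        0 < Γtr.det - G ξ φ ∧ Γtr.det - G ξ φ < 4 ∧
          1/2 < (Γtr.det - G ξ φ) ^ (-(1/2) : ℝ) := by

  intro a b c d e f Γtr C S U ux uy kx ky G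
  have hv0 : vphi 0 = ![0, 1] := by
    simp [vphi]
  have hv1 : vphi (0 - π/2) = ![-1, 0] := by
    simp [vphi, Real.sin_pi_div_two, Real.cos_pi_div_two]
  have hΓ : Γtr = !![(2.75 : ℝ), 0; 0, 30.59] := by
    simp only [Γtr, Rm]
    ext i j
    fin_cases i <;> fin_cases j <;>
      simp [Matrix.smul_apply, Matrix.sub_apply, Matrix.one_apply] <;> norm_num
  have hdet : Γtr.det = 84.1225 := by
    rw [hΓ, Matrix.det_fin_two_of]; norm_num
  have hS : S = !![(3.43 : ℝ), 0; 0, 21.17] := by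
    simp only [S, Rm]
    ext i j
    fin_cases i <;> fin_cases j <;>
      simp [Matrix.smul_apply, Matrix.sub_apply, Matrix.one_apply] <;> norm_num
  have hU : U = !![(359.888291 : ℝ), 0; 0, 1232.464475] := by
    simp only [U, hS, hΓ, Om]
    ext i j
    fin_cases i <;> fin_cases j <;>
      · simp [Matrix.mul_apply, Fin.sum_univ_two, Matrix.cons_transpose,
          Matrix.vecHead, Matrix.vecTail, Matrix.vecMul, dotProduct]
        try norm_num
  have hC : C = !![(15.2 : ℝ), 0; 0, 15.2] := by
    simp only [C]
    ext i j
    fin_cases i <;> fin_cases j <;>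
      simp [Matrix.smul_apply, Matrix.one_apply, c]
  have hux : ux = 231.29 := by
    simp only [ux, hC, Matrix.det_fin_two_of]; norm_num
  have huy : uy = -18931.09975159 := by
    simp only [uy, hC, hU, hS, Om]
    rw [Matrix.trace_fin_two]
    simp [Matrix.det_fin_two, Matrix.mul_apply, Fin.sum_univ_two,
      Matrix.cons_transpose, Matrix.vecHead, Matrix.vecTail, Matrix.vecMul, dotProduct]
    norm_num
  have hkx0 : kx 0 = 1232.464475 := by
    simp only [kx, hv0, hU]
    simp [dotProduct, Matrix.mulVec, Fin.sum_univ_two]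
  have hkx1 : kx (0 - π/2) = 359.888291 := by
    simp only [kx, hv1, hU]
    simp [dotProduct, Matrix.mulVec, Fin.sum_univ_two]
  have hky0 : ky 0 = 15.2 := by
    simp only [ky, hv0, hC]
    simp [dotProduct, Matrix.mulVec, Fin.sum_univ_two]
  have hky1 : ky (0 - π/2) = 15.2 := by
    simp only [ky, hv1, hC]
    simp [dotProduct, Matrix.mulVec, Fin.sum_univ_two]
  have hG : Γtr.det - G (87/1000) 0 = 144604952776761/55559508800000 := by
    simp only [G, hdet, huy, hux, hkx0, hkx1, hky0, hky1]
    norm_num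
  have habs : ∀ x : ℝ, 0 < x → x ^ (-(1/2) : ℝ) = (Real.sqrt x)⁻¹ := by
    intro x hx
    rw [Real.rpow_neg hx.le, Real.sqrt_eq_rpow]
  refine ⟨by rw [hdet]; norm_num, ?_, 87/1000, by norm_num, 0, ?_, ?_, ?_⟩
  · rw [habs _ (by rw [hdet]; norm_num)]
    have h2 : (2 : ℝ) < Real.sqrt Γtr.det := by
      rw [show (2:ℝ) = Real.sqrt 4 by
        rw [show (4:ℝ) = 2^2 by norm_num, Real.sqrt_sq (by norm_num)]]
      exact Real.sqrt_lt_sqrt (by norm_num) (by rw [hdet]; norm_num)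
    calc (Real.sqrt Γtr.det)⁻¹ < 2⁻¹ := by
          exact (inv_lt_inv₀ (lt_trans two_pos h2) two_pos).mpr h2
      _ = 1/2 := by norm_num
  · rw [hG]; norm_num
  · rw [hG]; norm_num
  · rw [hG, habs _ (by norm_num)]
    have hlt : Real.sqrt (144604952776761/55559508800000) < 2 := by
      rw [show (2:ℝ) = Real.sqrt 4 by
        rw [show (4:ℝ) = 2^2 by norm_num, Real.sqrt_sq (by norm_num)]]
      exact Real.sqrt_lt_sqrt (by norm_num) (by norm_num)
    have hpos : (0:ℝ) < Real.sqrt (144604952776761/55559508800000) :=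
      Real.sqrt_pos.mpr (by norm_num)
    calc (1:ℝ)/2 = 2⁻¹ := by norm_num
      _ < (Real.sqrt (144604952776761/55559508800000))⁻¹ :=
          (inv_lt_inv₀ two_pos hpos).mpr hlt
end
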